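/- Let A < B, let k = 2m be even and let Ψ₀,…,Ψ_{2m−1} : [A,B] → ℝ be a Chebyshev system. If σ₁ and σ₂ are finitely supported nonnegative measures on [A,B], each supported on exactly m points all lying in the open interval (A,B), and ∫_A^B Ψ_i dσ₁ = ∫_A^B Ψ_i dσ₂ for all i = 0,…,2m−1, then σ₁ = σ₂. (Uniqueness of the lower principal representation for even k.) -/

import Mathlib

/-!
The difference `σ₁ - σ₂` is a signed measure carried by the at most `2m` points of `s₁ ∪ s₂`
and annihilating every `Ψᵢ`. Padding `s₁ ∪ s₂` to exactly `2m` points of `[A,B]`, the vanishing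
of its moments says that the vector of its weights lies in the kernel of the Chebyshev matrix
`(Ψᵢ(xⱼ))`, which is invertible because its determinant is positive.
-/

open MeasureTheory Set

/-- A family of functions `Ψ₀, …, Ψ_{k-1}` is a Chebyshev system on `[A,B]` if for all
points `A ≤ x₀ < x₁ < ⋯ < x_{k-1} ≤ B` the matrix `(Ψ i (x j))` has positive determinant. -/
def IsChebyshevSystem (A B : ℝ) {k : ℕ} (Ψ : Fin k → ℝ → ℝ) : Prop :=
  ∀ x : Fin k → ℝ, StrictMono x → (∀ j, x j ∈ Set.Icc A B) →
    0 < (Matrix.of fun i j : Fin k => Ψ i (x j)).det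

/-- `σ` is a finitely supported nonnegative measure on `[A,B]`, supported exactly on the
finite set `s ⊆ [A,B]`, i.e. `σ = ∑_{x ∈ s} a_x δ_x` with positive finite weights. -/
def IsAtomicMeasureOn (A B : ℝ) (σ : Measure ℝ) (s : Finset ℝ) : Prop :=
  ↑s ⊆ Set.Icc A B ∧ (∀ x ∈ s, 0 < σ {x} ∧ σ {x} < ⊤) ∧
    σ = ∑ x ∈ s, σ {x} • Measure.dirac x

theorem Set.Infinite.exists_finset_superset_card_eq {α : Type*} [DecidableEq α] {S : Set α}
    (hS : S.Infinite) {t : Finset α} (ht : ↑t ⊆ S) {n : ℕ} (hn : t.card ≤ n) :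
    ∃ u : Finset α, t ⊆ u ∧ ↑u ⊆ S ∧ u.card = n := by
  obtain ⟨v, hvS, hvcard⟩ := (hS.sdiff t.finite_toSet).exists_subset_card_eq (n - t.card)
  have hdisj : Disjoint t v :=
    Finset.disjoint_right.mpr fun _ hx hxt => (hvS hx).2 hxt
  refine ⟨t ∪ v, Finset.subset_union_left, ?_, ?_⟩
  · rw [Finset.coe_union]
    exact union_subset ht fun _ hx => (hvS hx).1
  · rw [Finset.card_union_of_disjoint hdisj, hvcard]
    omega

namespace IsChebyshevSystem

variable {A B : ℝ} {k : ℕ} {Ψ : Fin k → ℝ → ℝ}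

theorem eq_zero_of_sum_mul_eq_zero_of_card_eq (hΨ : IsChebyshevSystem A B Ψ) {t : Finset ℝ}
    (htAB : ↑t ⊆ Icc A B) (hcard : t.card = k) {w : ℝ → ℝ}
    (hw : ∀ i, ∑ x ∈ t, w x * Ψ i x = 0) : ∀ x ∈ t, w x = 0 := by
  set e := t.orderEmbOfFin hcard
  have hdet : IsUnit (Matrix.of fun i j => Ψ i (e j)).det :=
    (hΨ e e.strictMono fun j => htAB (t.orderEmbOfFin_mem hcard j)).ne'.isUnit
  have hkernel : (Matrix.of fun i j => Ψ i (e j)).mulVec (fun j => w (e j)) = 0 := by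
    funext i
    rw [Pi.zero_apply, ← hw i, ← t.map_orderEmbOfFin_univ hcard, Finset.sum_map]
    exact Fintype.sum_congr _ _ fun j => mul_comm (Ψ i (e j)) (w (e j))
  have hzero : (fun j => w (e j)) = 0 :=
    Matrix.mulVec_injective_iff_isUnit.mpr ((Matrix.isUnit_iff_isUnit_det _).mpr hdet)
      (hkernel.trans (Matrix.mulVec_zero _).symm)
  intro x hx
  obtain ⟨j, rfl⟩ : x ∈ Set.range e := by rwa [t.range_orderEmbOfFin hcard]
  exact congrFun hzero j

theorem eq_zero_of_sum_mul_eq_zero (hΨ : IsChebyshevSystem A B Ψ) (hAB : A < B)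
    {t : Finset ℝ} (htAB : ↑t ⊆ Icc A B) (hcard : t.card ≤ k) {w : ℝ → ℝ}
    (hw : ∀ i, ∑ x ∈ t, w x * Ψ i x = 0) : ∀ x ∈ t, w x = 0 := by
  classical
  obtain ⟨u, htu, huAB, hucard⟩ := (Icc_infinite hAB).exists_finset_superset_card_eq htAB hcard
  have hwu : ∀ i, ∑ x ∈ u, (↑t : Set ℝ).indicator w x * Ψ i x = 0 := fun i => by
    rw [← Finset.sum_subset htu fun x _ hx => by rw [indicator_of_notMem hx, zero_mul], ← hw i]
    exact Finset.sum_congr rfl fun x hx => by rw [indicator_of_mem hx]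
  intro x hx
  rw [← indicator_of_mem (Finset.mem_coe.mpr hx) w]
  exact hΨ.eq_zero_of_sum_mul_eq_zero_of_card_eq huAB hucard hwu x (htu hx)

end IsChebyshevSystem

namespace IsAtomicMeasureOn

variable {A B : ℝ} {σ : Measure ℝ} {s t : Finset ℝ}

theorem measure_singleton_eq_zero (h : IsAtomicMeasureOn A B σ s) {x : ℝ} (hx : x ∉ s) :
    σ {x} = 0 := by
  rw [h.2.2, Measure.finsetSum_apply]
  refine Finset.sum_eq_zero fun y hy => ?_
  rw [Measure.smul_apply, Measure.dirac_apply' _ (measurableSet_singleton x),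
    indicator_of_notMem (by rintro rfl; exact hx hy), smul_zero]

theorem measure_singleton_ne_top (h : IsAtomicMeasureOn A B σ s) (x : ℝ) : σ {x} ≠ ⊤ := by
  by_cases hx : x ∈ s
  · exact (h.2.1 x hx).2.ne
  · simp [h.measure_singleton_eq_zero hx]

theorem eq_sum_dirac (h : IsAtomicMeasureOn A B σ s) (hst : s ⊆ t) :
    σ = ∑ x ∈ t, σ {x} • Measure.dirac x :=
  h.2.2.trans <| Finset.sum_subset hst fun x _ hx => by
    rw [h.measure_singleton_eq_zero hx, zero_smul]

theorem integral_eq_sum (h : IsAtomicMeasureOn A B σ s) (hst : s ⊆ t) (f : ℝ → ℝ) :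
    ∫ x, f x ∂σ = ∑ x ∈ t, (σ {x}).toReal * f x := by
  conv_lhs => rw [h.eq_sum_dirac hst]
  rw [integral_finsetSum_measure fun x _ =>
    (integrable_dirac enorm_lt_top).smul_measure (h.measure_singleton_ne_top x)]
  exact Finset.sum_congr rfl fun x _ => by rw [integral_smul_measure, integral_dirac, smul_eq_mul]

end IsAtomicMeasureOn

theorem lower_principal_representation_unique_even_general
    {m : ℕ} (A B : ℝ) (hAB : A < B) (Ψ : Fin (2 * m) → ℝ → ℝ)
    (hCheb : IsChebyshevSystem A B Ψ)
    (σ₁ σ₂ : Measure ℝ) (s₁ s₂ : Finset ℝ)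
    (h₁ : IsAtomicMeasureOn A B σ₁ s₁) (h₂ : IsAtomicMeasureOn A B σ₂ s₂)
    (hcard₁ : s₁.card = m) (hcard₂ : s₂.card = m)
    (hmom : ∀ i, ∫ x, Ψ i x ∂σ₁ = ∫ x, Ψ i x ∂σ₂) :
    σ₁ = σ₂ := by
  classical
  set t := s₁ ∪ s₂
  have htAB : ↑t ⊆ Icc A B := by
    rw [Finset.coe_union]
    exact union_subset h₁.1 h₂.1
  have hcard : t.card ≤ 2 * m := (Finset.card_union_le s₁ s₂).trans (by omega)
  have hdiff : ∀ i, ∑ x ∈ t, ((σ₁ {x}).toReal - (σ₂ {x}).toReal) * Ψ i x = 0 := fun i => by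
    simp only [sub_mul, Finset.sum_sub_distrib]
    rw [← h₁.integral_eq_sum Finset.subset_union_left,
      ← h₂.integral_eq_sum Finset.subset_union_right, hmom, sub_self]
  have hweights := hCheb.eq_zero_of_sum_mul_eq_zero hAB htAB hcard hdiff
  rw [h₁.eq_sum_dirac Finset.subset_union_left, h₂.eq_sum_dirac Finset.subset_union_right]
  refine Finset.sum_congr rfl fun x hx => ?_
  rw [(ENNReal.toReal_eq_toReal_iff' (h₁.measure_singleton_ne_top x)
    (h₂.measure_singleton_ne_top x)).mp (sub_eq_zero.mp (hweights x hx))]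

/-- Uniqueness of the lower principal representation for even `k = 2m`: two finitely
supported nonnegative measures on `[A,B]`, each supported on exactly `m` points of the
open interval `(A,B)`, with equal moments w.r.t. a Chebyshev system `Ψ₀,…,Ψ_{2m-1}`,
coincide. -/
theorem lower_principal_representation_unique_even
    {m : ℕ} (A B : ℝ) (hAB : A < B) (Ψ : Fin (2 * m) → ℝ → ℝ)
    (hcont : ∀ i, ContinuousOn (Ψ i) (Set.Icc A B))
    (hCheb : IsChebyshevSystem A B Ψ)
    (σ₁ σ₂ : Measure ℝ) (s₁ s₂ : Finset ℝ)
    (h₁ : IsAtomicMeasureOn A B σ₁ s₁) (h₂ : IsAtomicMeasureOn A B σ₂ s₂)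
    (hcard₁ : s₁.card = m) (hcard₂ : s₂.card = m)
    (hint₁ : ↑s₁ ⊆ Set.Ioo A B) (hint₂ : ↑s₂ ⊆ Set.Ioo A B)
    (hmom : ∀ i, ∫ x, Ψ i x ∂σ₁ = ∫ x, Ψ i x ∂σ₂) :
    σ₁ = σ₂ :=
  lower_principal_representation_unique_even_general A B hAB Ψ hCheb σ₁ σ₂ s₁ s₂ h₁ h₂ hcard₁ hcard₂
    hmom
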